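/- UPLA, forced-literal case: let Ψ = Π : φ be a DQBF, v a variable, V' = dep(v). If abs(Π : φ ∧ v, V') is unsatisfiable, then Ψ ≡ Π : φ ∧ ¬v; symmetrically, if abs(Π : φ ∧ ¬v, V') is unsatisfiable, then Ψ ≡ Π : φ ∧ v. -/

import Mathlib

/- Formalization of DQBF (dependency quantified Boolean formulas),
   Skolem-function semantics, abstraction, and clause operations. -/

attribute [local instance] Classical.propDecidable

namespace DQBFPaper

/-- An assignment of Boolean values to the variables. -/
abbrev Assignment (V : Type) := V → Bool

/-- A DQBF over variables `V`: the variables in `exVars` are existential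
    (with dependency sets given by `dep`), the others are universal;
    `matrix` is the quantifier-free part. -/
structure DQBF (V : Type) where
  exVars : Set V
  dep : V → Set V
  matrix : Assignment V → Prop

/-- A literal: a variable together with a polarity (`true` = positive). -/
abbrev Lit (V : Type) := V × Bool

/-- Evaluation of a literal under an assignment. -/
def Lit.eval {V : Type} (a : Assignment V) (l : Lit V) : Bool :=
  if l.2 then a l.1 else !a l.1

/-- Negation of a literal. -/
def Lit.neg {V : Type} (l : Lit V) : Lit V := (l.1, !l.2)

/-- A clause: a set of literals (interpreted disjunctively). -/
abbrev Clause (V : Type) := Set (Lit V)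

/-- A clause is true iff some literal in it is true. -/
def Clause.eval {V : Type} (a : Assignment V) (C : Clause V) : Prop :=
  ∃ l ∈ C, Lit.eval a l = true

/-- A clause is non-tautological if no variable occurs with both polarities. -/
def NonTaut {V : Type} (C : Clause V) : Prop :=
  ∀ v : V, ¬((v, true) ∈ C ∧ (v, false) ∈ C)

namespace DQBF

variable {V : Type}

/-- The universal variables of a DQBF. -/
def univVars (Ψ : DQBF V) : Set V := Ψ.exVarsᶜ

/-- Well-formedness: dependency sets of existential variables consist of
    universal variables only. -/
def WellFormed (Ψ : DQBF V) : Prop :=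
  ∀ y ∈ Ψ.exVars, Ψ.dep y ⊆ Ψ.exVarsᶜ

/-- Substituting candidate Skolem functions `s` for the existential variables,
    given an assignment `a` of the universal variables. -/
noncomputable def subst (Ψ : DQBF V) (s : V → Assignment V → Bool)
    (a : Assignment V) : Assignment V :=
  fun v => if v ∈ Ψ.exVars then s v a else a v

/-- `s` respects the dependency sets: the value of each existential variable
    only depends on the assignment of its dependency set. -/
def Respects (Ψ : DQBF V) (s : V → Assignment V → Bool) : Prop :=
  ∀ y ∈ Ψ.exVars, ∀ a b : Assignment V, (∀ x ∈ Ψ.dep y, a x = b x) → s y a = s y b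

/-- `s` is a Skolem function for `Ψ`: it respects the dependencies and
    substituting it turns the matrix into a tautology. -/
def IsSkolem (Ψ : DQBF V) (s : V → Assignment V → Bool) : Prop :=
  Ψ.Respects s ∧ ∀ a : Assignment V, Ψ.matrix (Ψ.subst s a)

/-- A DQBF is satisfiable iff it has a Skolem function. -/
def Satisfiable (Ψ : DQBF V) : Prop := ∃ s, Ψ.IsSkolem s

/-- Two DQBFs (over the same prefix) are equivalent iff they have exactly the
    same Skolem functions. -/
def Equivalent (Ψ₁ Ψ₂ : DQBF V) : Prop := ∀ s, Ψ₁.IsSkolem s ↔ Ψ₂.IsSkolem s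

/-- Equi-satisfiability. -/
def EquiSat (Ψ₁ Ψ₂ : DQBF V) : Prop := Ψ₁.Satisfiable ↔ Ψ₂.Satisfiable

/-- Abstraction w.r.t. a set `V'` of universal variables: each variable of `V'`
    becomes existential with empty dependency set (and is removed from all
    dependency sets); the matrix is unchanged. -/
noncomputable def abst (Ψ : DQBF V) (V' : Set V) : DQBF V where
  exVars := Ψ.exVars ∪ V'
  dep := fun v => if v ∈ V' then ∅ else Ψ.dep v \ V'
  matrix := Ψ.matrix

/-- Conjoin a clause to the matrix. -/
def addClause (Ψ : DQBF V) (C : Clause V) : DQBF V :=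
  { Ψ with matrix := fun a => Ψ.matrix a ∧ Clause.eval a C }

/-- Conjoin the negation of a clause (i.e. the unit clauses negating each of
    its literals) to the matrix. -/
def addNegClause (Ψ : DQBF V) (C : Clause V) : DQBF V :=
  { Ψ with matrix := fun a => Ψ.matrix a ∧ ∀ l ∈ C, Lit.eval a l = false }

/-- Generalized dependencies: `dep v = {v}` for universal `v`,
    `dep v = D_v` for existential `v`. -/
noncomputable def depVar (Ψ : DQBF V) (v : V) : Set V :=
  if v ∈ Ψ.exVars then Ψ.dep v else {v}

/-- Dependencies of a literal. -/
noncomputable def depLit (Ψ : DQBF V) (l : Lit V) : Set V := Ψ.depVar l.1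

/-- Dependencies of a clause. -/
noncomputable def depClause (Ψ : DQBF V) (C : Clause V) : Set V :=
  ⋃ l ∈ C, Ψ.depLit l

/-- Under the Skolem candidate `s`, the literal `l` is constantly true,
    i.e. true for every assignment of the universal variables. -/
noncomputable def ConstTrue (Ψ : DQBF V) (s : V → Assignment V → Bool)
    (l : Lit V) : Prop :=
  ∀ a : Assignment V, Lit.eval (Ψ.subst s a) l = true

/-- A DQBF with a CNF matrix given by a set of clauses. -/
def mkCNF (exVars : Set V) (dep : V → Set V) (φ : Set (Clause V)) : DQBF V :=
  ⟨exVars, dep, fun a => ∀ C ∈ φ, Clause.eval a C⟩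

/-- Universal reduction of a clause: remove every universal literal on which
    no existential literal of the clause depends. -/
def urClause (Ψ : DQBF V) (C : Clause V) : Clause V :=
  C \ {l | l.1 ∉ Ψ.exVars ∧ ∀ k ∈ C, k.1 ∈ Ψ.exVars → l.1 ∉ Ψ.dep k.1}

/-- Outer variables of an existential variable `v`. -/
noncomputable def ovEx (Ψ : DQBF V) (v : V) : Set V :=
  {w | Ψ.depVar w ⊆ Ψ.depVar v}

/-- The kernel of a universal variable `v`. -/
def kernel (Ψ : DQBF V) (v : V) : Set V :=
  ⋂ y ∈ {y | y ∈ Ψ.exVars ∧ v ∈ Ψ.dep y}, Ψ.dep y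

/-- Outer variables of a universal variable `v`. -/
def ovUniv (Ψ : DQBF V) (v : V) : Set V :=
  Ψ.kernel v ∪ {y | y ∈ Ψ.exVars ∧ v ∉ Ψ.dep y ∧ Ψ.dep y ⊆ Ψ.kernel v}

/-- The outer clause of `D` w.r.t. a set of outer variables. -/
def OC (D : Clause V) (OV : Set V) : Clause V := {k ∈ D | k.1 ∈ OV}

/-- Outer resolvent for an existential pivot literal `l ∈ C`. -/
noncomputable def orEx (Ψ : DQBF V) (C D : Clause V) (l : Lit V) : Clause V :=
  C ∪ (OC D (Ψ.ovEx l.1) \ {Lit.neg l})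

/-- Outer resolvent for a universal pivot literal `l ∈ C`. -/
def orUniv (Ψ : DQBF V) (C D : Clause V) (l : Lit V) : Clause V :=
  (C \ {l}) ∪ OC D (Ψ.ovUniv l.1)

/-- Outer resolvent (case split on the quantifier type of the pivot). -/
noncomputable def orRes (Ψ : DQBF V) (C D : Clause V) (l : Lit V) : Clause V :=
  if l.1 ∈ Ψ.exVars then Ψ.orEx C D l else Ψ.orUniv C D l

end DQBF

end DQBFPaper

namespace DQBFPaper
open DQBF

/- Fix a Skolem function `s` of `Ψ` and a universal assignment `a` under which `s` makes the
literal `l` true. Freezing the universal variables of `V' ⊇ dep(l)` to their values under `a`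
turns `s` into a Skolem function of `abs(Ψ, V')`, and under it `l` keeps the value it has at
`a`, since `l` only sees `dep(l)`; well-formedness is what makes `dep(l)` universal. So if
`abs(Π : φ ∧ l, dep(l))` is unsatisfiable, every Skolem function of `Ψ` makes `¬l` constantly
true, which is exactly what adding `¬l` to `φ` needs. -/

theorem Lit.eval_neg {V : Type} (a : Assignment V) (l : Lit V) :
    Lit.eval a (Lit.neg l) = !Lit.eval a l := by
  rcases l with ⟨x, _ | _⟩ <;> simp [Lit.eval, Lit.neg]

namespace DQBF

variable {V : Type} (Ψ : DQBF V)

theorem depVar_subset_compl_exVars (hwf : Ψ.WellFormed) (x : V) :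
    Ψ.depVar x ⊆ Ψ.exVarsᶜ := by
  unfold depVar
  split_ifs with hx
  · exact hwf x hx
  · exact Set.singleton_subset_iff.mpr hx

variable {Ψ}

theorem subst_congr_of_eqOn_depVar {s : V → Assignment V → Bool} (hs : Ψ.Respects s)
    {a b : Assignment V} {x : V} (hab : Set.EqOn a b (Ψ.depVar x)) :
    Ψ.subst s a x = Ψ.subst s b x := by
  unfold subst
  unfold depVar at hab
  split_ifs at hab ⊢ with hx
  · exact hs x hx a b hab
  · exact hab rfl

theorem clauseEval_congr_of_eqOn_depClause {s : V → Assignment V → Bool} (hs : Ψ.Respects s)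
    {a b : Assignment V} {C : Clause V} (hab : Set.EqOn a b (Ψ.depClause C)) :
    Clause.eval (Ψ.subst s a) C ↔ Clause.eval (Ψ.subst s b) C := by
  have hlit : ∀ l ∈ C, Lit.eval (Ψ.subst s a) l = Lit.eval (Ψ.subst s b) l := fun l hl => by
    have hl' : Ψ.depVar l.1 ⊆ Ψ.depClause C := Set.subset_biUnion_of_mem (u := Ψ.depLit) hl
    simp only [Lit.eval, subst_congr_of_eqOn_depVar hs (hab.mono hl')]
  unfold Clause.eval
  exact exists_congr fun l => and_congr_right fun hl => by rw [hlit l hl]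

noncomputable def freezeSkolem (s : V → Assignment V → Bool) (V' : Set V) (a : Assignment V) :
    V → Assignment V → Bool :=
  fun x c => if x ∈ V' then a x else s x (V'.piecewise a c)

theorem subst_abst_freezeSkolem (s : V → Assignment V → Bool) {V' : Set V}
    (hV' : V' ⊆ Ψ.exVarsᶜ) (a c : Assignment V) :
    (Ψ.abst V').subst (freezeSkolem s V' a) c = Ψ.subst s (V'.piecewise a c) := by
  funext x
  by_cases hx : x ∈ V'
  · have hxU : x ∉ Ψ.exVars := hV' hx
    simp [subst, abst, freezeSkolem, hx, hxU]
  · by_cases hxE : x ∈ Ψ.exVars <;> simp [subst, abst, freezeSkolem, hx, hxE]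

theorem Respects.abst_freezeSkolem {s : V → Assignment V → Bool} (hs : Ψ.Respects s)
    (V' : Set V) (a : Assignment V) : (Ψ.abst V').Respects (freezeSkolem s V' a) := by
  intro y hy c d hcd
  by_cases hyV : y ∈ V'
  · simp [freezeSkolem, hyV]
  · have hyE : y ∈ Ψ.exVars := hy.resolve_right hyV
    simp only [freezeSkolem, if_neg hyV]
    refine hs y hyE _ _ fun x hx => ?_
    by_cases hxV : x ∈ V'
    · simp [hxV]
    · simpa [hxV] using hcd x (by simp [abst, hyV, hx, hxV])

theorem satisfiable_abst_addClause {s : V → Assignment V → Bool} (hs : Ψ.IsSkolem s)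
    {C : Clause V} {a : Assignment V} (hC : Clause.eval (Ψ.subst s a) C) {V' : Set V}
    (hV' : V' ⊆ Ψ.exVarsᶜ) (hCV' : Ψ.depClause C ⊆ V') :
    ((Ψ.addClause C).abst V').Satisfiable := by
  refine ⟨freezeSkolem s V' a, hs.1.abst_freezeSkolem V' a, fun c => ?_⟩
  change Ψ.matrix ((Ψ.abst V').subst _ c) ∧ Clause.eval ((Ψ.abst V').subst _ c) C
  rw [subst_abst_freezeSkolem s hV' a c]
  have hfrozen : Set.EqOn (V'.piecewise a c) a (Ψ.depClause C) :=
    (Set.piecewise_eqOn V' a c).mono hCV'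
  exact ⟨hs.2 _, (clauseEval_congr_of_eqOn_depClause hs.1 hfrozen).mpr hC⟩

theorem constTrue_neg_of_not_satisfiable_abst (hwf : Ψ.WellFormed) {l : Lit V}
    (hl : ¬ ((Ψ.addClause {l}).abst (Ψ.depLit l)).Satisfiable)
    {s : V → Assignment V → Bool} (hs : Ψ.IsSkolem s) : Ψ.ConstTrue s (Lit.neg l) := by
  intro a
  rw [Lit.eval_neg, Bool.not_eq_true']
  by_contra hne
  refine hl (satisfiable_abst_addClause (C := {l}) (V' := Ψ.depLit l) hs
    ⟨l, rfl, Bool.not_eq_false _ ▸ hne⟩ (depVar_subset_compl_exVars Ψ hwf l.1) ?_)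
  simp [depClause]

theorem equivalent_addClause_singleton_of_constTrue {l : Lit V}
    (hl : ∀ s, Ψ.IsSkolem s → Ψ.ConstTrue s l) : Ψ.Equivalent (Ψ.addClause {l}) :=
  fun s => ⟨fun hs => ⟨hs.1, fun a => ⟨hs.2 a, l, rfl, hl s hs a⟩⟩,
    fun hs => ⟨hs.1, fun a => (hs.2 a).1⟩⟩

end DQBF

/-- UPLA, forced-literal case: with `V' = dep(v)`, if
`abs(Π : φ ∧ v, V')` is unsatisfiable then `Ψ ≡ Π : φ ∧ ¬v`; symmetrically, if
`abs(Π : φ ∧ ¬v, V')` is unsatisfiable then `Ψ ≡ Π : φ ∧ v`. -/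
theorem upla_forced_literal {V : Type} (Ψ : DQBF V) (v : V)
    (hwf : Ψ.WellFormed) :
    (¬ ((Ψ.addClause {(v, true)}).abst (Ψ.depVar v)).Satisfiable →
      Ψ.Equivalent (Ψ.addClause {(v, false)})) ∧
    (¬ ((Ψ.addClause {(v, false)}).abst (Ψ.depVar v)).Satisfiable →
      Ψ.Equivalent (Ψ.addClause {(v, true)})) :=
  ⟨fun h => equivalent_addClause_singleton_of_constTrue fun _ hs =>
      constTrue_neg_of_not_satisfiable_abst hwf (l := (v, true)) h hs,
    fun h => equivalent_addClause_singleton_of_constTrue fun _ hs =>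
      constTrue_neg_of_not_satisfiable_abst hwf (l := (v, false)) h hs⟩

end DQBFPaper
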